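/- (Subsonic Cauchy problem.) Let θ₁ ∈ (π/2, π) and u₁ ∈ (0, c_*). Then there exists a unique C¹ function u : [π/2, θ₁] → ℝ with u(θ₁) = u₁, 0 < u(θ) < c_* for all θ, satisfying u′(θ) = cot θ·c(u(θ))²·u(θ)/(u(θ)² − c(u(θ))²) on [π/2, θ₁]; moreover u is strictly increasing on [π/2, θ₁]. -/

import Mathlib

open Real Set Filter Topology

/-- Maximal speed `u_max = √(2c₀²/(γ−1))`. -/
noncomputable def uMax (γ c₀ : ℝ) : ℝ := Real.sqrt (2 * c₀ ^ 2 / (γ - 1))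

/-- Critical (sonic) speed `c_* = √(2c₀²/(γ+1))`. -/
noncomputable def cStar (γ c₀ : ℝ) : ℝ := Real.sqrt (2 * c₀ ^ 2 / (γ + 1))

/-- Local sonic speed `c(u) = √(c₀² − ((γ−1)/2)u²)`. -/
noncomputable def sonic (γ c₀ u : ℝ) : ℝ := Real.sqrt (c₀ ^ 2 - (γ - 1) / 2 * u ^ 2)

/-- Density `ρ(u) = ((c₀² − ((γ−1)/2)u²)/γ)^{1/(γ−1)}`. -/
noncomputable def dens (γ c₀ u : ℝ) : ℝ :=
  ((c₀ ^ 2 - (γ - 1) / 2 * u ^ 2) / γ) ^ ((1 : ℝ) / (γ - 1))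

/-- Mass flux `F(u) = ρ(u)·u`. -/
noncomputable def flux (γ c₀ u : ℝ) : ℝ := dens γ c₀ u * u

/-- Pressure `p(u) = ρ(u)^γ`. -/
noncomputable def pres (γ c₀ u : ℝ) : ℝ := dens γ c₀ u ^ γ

/-!
Along a subsonic solution of `u' = cot θ · c(u)² u / (u² - c(u)²)` the quantity `sin θ · F(u)`
is conserved, because `F'(u) = ρ(u) (1 - u² / c(u)²)`. As `F` is strictly increasing on `[0, c_*]`,
the Cauchy problem is solved explicitly by `u(θ) = F⁻¹(sin θ₁ · F(u₁) / sin θ)`, which increases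
with `θ` because `sin` decreases on `[π/2, π]`; conversely, conservation of `sin θ · F(u)` and the
injectivity of `F` force every subsonic solution to be this one.
-/

namespace Set

variable {a b : ℝ} (h : a ≤ b) (f : ℝ → ℝ)

noncomputable def IccExtendAffine (x : ℝ) : ℝ :=
  f (projIcc a b h x) + (x - projIcc a b h x)

variable {h f}

theorem IccExtendAffine_of_mem {x : ℝ} (hx : x ∈ Icc a b) : IccExtendAffine h f x = f x := by
  simp [IccExtendAffine, projIcc_of_mem h hx]

theorem IccExtendAffine_of_right_le {x : ℝ} (hx : b ≤ x) :
    IccExtendAffine h f x = f b + (x - b) := by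
  simp [IccExtendAffine, projIcc_of_right_le h hx]

theorem IccExtendAffine_of_le_left {x : ℝ} (hx : x ≤ a) :
    IccExtendAffine h f x = f a + (x - a) := by
  simp [IccExtendAffine, projIcc_of_le_left h hx]

theorem strictMono_IccExtendAffine (hf : StrictMonoOn f (Icc a b)) :
    StrictMono (IccExtendAffine h f) := by
  intro x y hxy
  have hp : (projIcc a b h x : ℝ) ≤ projIcc a b h y := monotone_projIcc h hxy.le
  -- `projIcc` is `1`-Lipschitz, so the slope-one part does not decrease
  have hlip : (projIcc a b h y : ℝ) - projIcc a b h x ≤ y - x := by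
    simpa [abs_of_nonneg (sub_nonneg.2 hp), abs_of_pos (sub_pos.2 hxy)] using
      abs_projIcc_sub_projIcc (c := y) (d := x) h
  unfold IccExtendAffine
  rcases hp.lt_or_eq with hlt | heq
  · have := hf (projIcc a b h x).2 (projIcc a b h y).2 hlt
    linarith
  · rw [heq]
    linarith

theorem continuous_IccExtendAffine (hf : ContinuousOn f (Icc a b)) :
    Continuous (IccExtendAffine h f) := by
  have hp : Continuous fun x => (projIcc a b h x : ℝ) :=
    continuous_subtype_val.comp continuous_projIcc
  exact (hf.comp_continuous hp fun x => (projIcc a b h x).2).add (continuous_id.sub hp)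

theorem surjective_IccExtendAffine (hf : ContinuousOn f (Icc a b)) :
    Function.Surjective (IccExtendAffine h f) := by
  refine (continuous_IccExtendAffine hf).surjective ?_ ?_
  · refine (tendsto_atTop_add_const_left atTop (f b - b) tendsto_id).congr' ?_
    filter_upwards [eventually_ge_atTop b] with x hx
    rw [IccExtendAffine_of_right_le hx, id]
    ring
  · refine (tendsto_atBot_add_const_left atBot (f a - a) tendsto_id).congr' ?_
    filter_upwards [eventually_le_atBot a] with x hx
    rw [IccExtendAffine_of_le_left hx, id]
    ring

end Set

theorem contDiffOn_one_of_hasDerivWithinAt {𝕜 : Type*} [NontriviallyNormedField 𝕜]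
    {f f' : 𝕜 → 𝕜} {s : Set 𝕜} (hs : UniqueDiffOn 𝕜 s)
    (hf : ∀ x ∈ s, HasDerivWithinAt f (f' x) s x) (hf' : ContinuousOn f' s) :
    ContDiffOn 𝕜 1 f s :=
  (contDiffOn_one_iff_derivWithin hs).2 ⟨fun x hx => (hf x hx).differentiableWithinAt,
    hf'.congr fun x hx => (hf x hx).derivWithin (hs x hx)⟩

theorem Real.strictAntiOn_sin : StrictAntiOn sin (Icc (π / 2) π) := by
  intro x hx y hy hxy
  rw [← sin_pi_sub x, ← sin_pi_sub y]
  exact strictMonoOn_sin ⟨by linarith [hy.2, pi_pos], by linarith [hy.1]⟩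
    ⟨by linarith [hx.2, pi_pos], by linarith [hx.1]⟩ (by linarith)

theorem Real.sin_pos_of_mem_Icc {θ θ₁ : ℝ} (hθ₁ : θ₁ < π) (hθ : θ ∈ Icc (π / 2) θ₁) :
    0 < sin θ :=
  sin_pos_of_pos_of_lt_pi (by linarith [hθ.1, pi_pos]) (hθ.2.trans_lt hθ₁)

theorem Real.sin_le_sin_of_mem_Icc {θ θ₁ : ℝ} (hθ₁ : θ₁ ≤ π) (hθ : θ ∈ Icc (π / 2) θ₁) :
    sin θ₁ ≤ sin θ :=
  Real.strictAntiOn_sin.antitoneOn ⟨hθ.1, hθ.2.trans hθ₁⟩ ⟨hθ.1.trans hθ.2, hθ₁⟩ hθ.2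

section GasDynamics

variable {γ c₀ u : ℝ}

theorem sonic_sq (hu : 0 ≤ c₀ ^ 2 - (γ - 1) / 2 * u ^ 2) :
    sonic γ c₀ u ^ 2 = c₀ ^ 2 - (γ - 1) / 2 * u ^ 2 :=
  sq_sqrt hu

theorem cStar_sq (hγ : 1 < γ) : cStar γ c₀ ^ 2 = 2 * c₀ ^ 2 / (γ + 1) :=
  sq_sqrt (by positivity)

theorem cStar_pos (hγ : 1 < γ) (hc₀ : 0 < c₀) : 0 < cStar γ c₀ :=
  sqrt_pos.2 (by positivity)

theorem sonic_radicand_eq (hγ : 1 < γ) :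
    c₀ ^ 2 - (γ - 1) / 2 * u ^ 2 = cStar γ c₀ ^ 2 + (γ - 1) / 2 * (cStar γ c₀ ^ 2 - u ^ 2) := by
  rw [cStar_sq hγ]
  field_simp
  ring

theorem sonic_radicand_pos (hγ : 1 < γ) (hc₀ : 0 < c₀) (hu : u ^ 2 ≤ cStar γ c₀ ^ 2) :
    0 < c₀ ^ 2 - (γ - 1) / 2 * u ^ 2 := by
  rw [sonic_radicand_eq hγ]
  have := cStar_pos hγ hc₀
  have : 0 ≤ (γ - 1) / 2 * (cStar γ c₀ ^ 2 - u ^ 2) := mul_nonneg (by linarith) (by linarith)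
  positivity

theorem sq_lt_sonic_sq (hγ : 1 < γ) (hu : u ^ 2 < cStar γ c₀ ^ 2) :
    u ^ 2 < sonic γ c₀ u ^ 2 := by
  have : 0 < (γ - 1) / 2 * (cStar γ c₀ ^ 2 - u ^ 2) := mul_pos (by linarith) (by linarith)
  have hlt : u ^ 2 < c₀ ^ 2 - (γ - 1) / 2 * u ^ 2 := by
    rw [sonic_radicand_eq hγ]
    linarith
  rwa [sonic_sq ((sq_nonneg u).trans hlt.le)]

theorem sonic_sq_pos (hγ : 1 < γ) (hu : u ^ 2 < cStar γ c₀ ^ 2) : 0 < sonic γ c₀ u ^ 2 :=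
  (sq_nonneg u).trans_lt (sq_lt_sonic_sq hγ hu)

theorem hasDerivAt_dens (hγ : 1 < γ) (hu : 0 < c₀ ^ 2 - (γ - 1) / 2 * u ^ 2) :
    HasDerivAt (dens γ c₀) (-(dens γ c₀ u * u / sonic γ c₀ u ^ 2)) u := by
  have hbase : 0 < (c₀ ^ 2 - (γ - 1) / 2 * u ^ 2) / γ := div_pos hu (by linarith)
  have hinner : HasDerivAt (fun u => (c₀ ^ 2 - (γ - 1) / 2 * u ^ 2) / γ)
      (-((γ - 1) / 2 * (2 * u)) / γ) u := by
    simpa using (((hasDerivAt_pow 2 u).const_mul ((γ - 1) / 2)).const_sub (c₀ ^ 2)).div_const γ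
  refine (hinner.rpow_const (p := 1 / (γ - 1)) (Or.inl hbase.ne')).congr_deriv ?_
  rw [rpow_sub_one hbase.ne', sonic_sq hu.le]
  unfold dens
  field_simp [(by linarith : γ - 1 ≠ 0), (by linarith : γ ≠ 0)]

/-- `F'(u) = ρ(u) (1 - M²)` with Mach number `M = u / c(u)`. -/
noncomputable def fluxDeriv (γ c₀ u : ℝ) : ℝ := dens γ c₀ u * (1 - u ^ 2 / sonic γ c₀ u ^ 2)

theorem hasDerivAt_flux (hγ : 1 < γ) (hu : 0 < c₀ ^ 2 - (γ - 1) / 2 * u ^ 2) :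
    HasDerivAt (flux γ c₀) (fluxDeriv γ c₀ u) u := by
  refine ((hasDerivAt_dens hγ hu).mul (hasDerivAt_id u)).congr_deriv ?_
  rw [fluxDeriv, id]
  ring

theorem dens_pos (hγ : 1 < γ) (hu : 0 < c₀ ^ 2 - (γ - 1) / 2 * u ^ 2) : 0 < dens γ c₀ u :=
  rpow_pos_of_pos (div_pos hu (by linarith)) _

theorem fluxDeriv_pos (hγ : 1 < γ) (hc₀ : 0 < c₀) (hu : u ^ 2 < cStar γ c₀ ^ 2) :
    0 < fluxDeriv γ c₀ u :=
  mul_pos (dens_pos hγ (sonic_radicand_pos hγ hc₀ hu.le))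
    (sub_pos.2 ((div_lt_one (sonic_sq_pos hγ hu)).2 (sq_lt_sonic_sq hγ hu)))

theorem flux_pos (hγ : 1 < γ) (hc₀ : 0 < c₀) (hu : u ∈ Ioo 0 (cStar γ c₀)) :
    0 < flux γ c₀ u :=
  mul_pos (dens_pos hγ (sonic_radicand_pos hγ hc₀ (pow_le_pow_left₀ hu.1.le hu.2.le 2))) hu.1

theorem continuousOn_flux (hγ : 1 < γ) (hc₀ : 0 < c₀) :
    ContinuousOn (flux γ c₀) (Icc 0 (cStar γ c₀)) := fun _ hu =>
  (hasDerivAt_flux hγ (sonic_radicand_pos hγ hc₀ (pow_le_pow_left₀ hu.1 hu.2 2))).continuousAt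
    |>.continuousWithinAt

theorem strictMonoOn_flux (hγ : 1 < γ) (hc₀ : 0 < c₀) :
    StrictMonoOn (flux γ c₀) (Icc 0 (cStar γ c₀)) := by
  refine strictMonoOn_of_deriv_pos (convex_Icc _ _) (continuousOn_flux hγ hc₀) fun u hu => ?_
  rw [interior_Icc] at hu
  have hu2 : u ^ 2 < cStar γ c₀ ^ 2 := pow_lt_pow_left₀ hu.2 hu.1.le two_ne_zero
  rw [(hasDerivAt_flux hγ (sonic_radicand_pos hγ hc₀ hu2.le)).deriv]
  exact fluxDeriv_pos hγ hc₀ hu2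

end GasDynamics

noncomputable def odeRhs (γ c₀ θ u : ℝ) : ℝ :=
  cot θ * sonic γ c₀ u ^ 2 * u / (u ^ 2 - sonic γ c₀ u ^ 2)

section Conservation

variable {γ c₀ : ℝ}

theorem fluxDeriv_mul_odeRhs (hγ : 1 < γ) {u : ℝ} (hu : u ^ 2 < cStar γ c₀ ^ 2) (θ : ℝ) :
    fluxDeriv γ c₀ u * odeRhs γ c₀ θ u = -(cot θ * flux γ c₀ u) := by
  have hc : sonic γ c₀ u ≠ 0 := (pow_ne_zero_iff two_ne_zero).1 (sonic_sq_pos hγ hu).ne'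
  have hMach := (sub_neg.2 (sq_lt_sonic_sq hγ hu)).ne
  rw [fluxDeriv, odeRhs, flux]
  field_simp
  ring

theorem hasDerivWithinAt_sin_mul_flux (hγ : 1 < γ) (hc₀ : 0 < c₀) {v : ℝ → ℝ} {s : Set ℝ}
    {θ : ℝ} (hsin : sin θ ≠ 0) (hv : v θ ^ 2 < cStar γ c₀ ^ 2)
    (hv' : HasDerivWithinAt v (odeRhs γ c₀ θ (v θ)) s θ) :
    HasDerivWithinAt (fun t => sin t * flux γ c₀ (v t)) 0 s θ := by
  have hF := (hasDerivAt_flux hγ (sonic_radicand_pos hγ hc₀ hv.le)).comp_hasDerivWithinAt θ hv'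
  refine ((hasDerivAt_sin θ).hasDerivWithinAt.mul hF).congr_deriv ?_
  rw [Function.comp_apply, fluxDeriv_mul_odeRhs hγ hv, cot_eq_cos_div_sin]
  field_simp
  ring

theorem sin_mul_flux_eq_of_odeRhs (hγ : 1 < γ) (hc₀ : 0 < c₀) {a b : ℝ}
    (hsin : ∀ θ ∈ Icc a b, sin θ ≠ 0) {v : ℝ → ℝ}
    (hv : ∀ θ ∈ Icc a b, v θ ∈ Ioo 0 (cStar γ c₀))
    (hv' : ∀ θ ∈ Icc a b, HasDerivWithinAt v (odeRhs γ c₀ θ (v θ)) (Icc a b) θ) :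
    ∀ θ ∈ Icc a b, sin θ * flux γ c₀ (v θ) = sin b * flux γ c₀ (v b) := by
  have hderiv : ∀ θ ∈ Icc a b,
      HasDerivWithinAt (fun t => sin t * flux γ c₀ (v t)) 0 (Icc a b) θ := fun θ hθ =>
    hasDerivWithinAt_sin_mul_flux hγ hc₀ (hsin θ hθ)
      (pow_lt_pow_left₀ (hv θ hθ).2 (hv θ hθ).1.le two_ne_zero) (hv' θ hθ)
  have hconst := constant_of_derivWithin_zero (fun θ hθ => (hderiv θ hθ).differentiableWithinAt)
    fun θ hθ => (hderiv θ (Ico_subset_Icc_self hθ)).derivWithin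
      (uniqueDiffOn_Icc (hθ.1.trans_lt hθ.2) θ (Ico_subset_Icc_self hθ))
  intro θ hθ
  rw [hconst θ hθ, hconst b (right_mem_Icc.2 (hθ.1.trans hθ.2))]

theorem eqOn_of_odeRhs (hγ : 1 < γ) (hc₀ : 0 < c₀) {a b : ℝ}
    (hsin : ∀ θ ∈ Icc a b, sin θ ≠ 0) {v w : ℝ → ℝ}
    (hv : ∀ θ ∈ Icc a b, v θ ∈ Ioo 0 (cStar γ c₀))
    (hw : ∀ θ ∈ Icc a b, w θ ∈ Ioo 0 (cStar γ c₀))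
    (hv' : ∀ θ ∈ Icc a b, HasDerivWithinAt v (odeRhs γ c₀ θ (v θ)) (Icc a b) θ)
    (hw' : ∀ θ ∈ Icc a b, HasDerivWithinAt w (odeRhs γ c₀ θ (w θ)) (Icc a b) θ)
    (hb : v b = w b) : EqOn v w (Icc a b) := by
  intro θ hθ
  refine (strictMonoOn_flux hγ hc₀).injOn (Ioo_subset_Icc_self (hv θ hθ))
    (Ioo_subset_Icc_self (hw θ hθ)) (mul_left_cancel₀ (hsin θ hθ) ?_)
  rw [sin_mul_flux_eq_of_odeRhs hγ hc₀ hsin hv hv' θ hθ,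
    sin_mul_flux_eq_of_odeRhs hγ hc₀ hsin hw hw' θ hθ, hb]

theorem continuousOn_odeRhs_comp (hγ : 1 < γ) {v : ℝ → ℝ} {s : Set ℝ}
    (hsin : ∀ θ ∈ s, sin θ ≠ 0) (hv : ∀ θ ∈ s, v θ ^ 2 < cStar γ c₀ ^ 2)
    (hvc : ContinuousOn v s) : ContinuousOn (fun θ => odeRhs γ c₀ θ (v θ)) s := by
  have hsonic : ContinuousOn (fun θ => sonic γ c₀ (v θ)) s :=
    continuous_sqrt.comp_continuousOn (by fun_prop)
  have hcot : ContinuousOn cot s :=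
    (continuousOn_cos.div continuousOn_sin hsin).congr fun θ _ => cot_eq_cos_div_sin θ
  exact ((hcot.mul (hsonic.pow 2)).mul hvc).div ((hvc.pow 2).sub (hsonic.pow 2)) fun θ hθ =>
    (sub_neg.2 (sq_lt_sonic_sq hγ (hv θ hθ))).ne

end Conservation

section Solution

variable {γ c₀ : ℝ} (hγ : 1 < γ) (hc₀ : 0 < c₀)

/-- Extending `F` beyond `[0, c_*]` makes `F⁻¹` a continuous function on all of `ℝ`. -/
noncomputable def fluxOrderIso : ℝ ≃o ℝ :=
  StrictMono.orderIsoOfSurjective (IccExtendAffine (cStar_pos hγ hc₀).le (flux γ c₀))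
    (strictMono_IccExtendAffine (strictMonoOn_flux hγ hc₀))
    (surjective_IccExtendAffine (continuousOn_flux hγ hc₀))

include hγ hc₀ in
theorem fluxOrderIso_apply {u : ℝ} (hu : u ∈ Icc 0 (cStar γ c₀)) :
    fluxOrderIso hγ hc₀ u = flux γ c₀ u := by
  rw [fluxOrderIso, StrictMono.coe_orderIsoOfSurjective, IccExtendAffine_of_mem hu]

include hγ hc₀ in
theorem fluxOrderIso_symm_flux {u : ℝ} (hu : u ∈ Icc 0 (cStar γ c₀)) :
    (fluxOrderIso hγ hc₀).symm (flux γ c₀ u) = u :=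
  (OrderIso.symm_apply_eq _).2 (fluxOrderIso_apply hγ hc₀ hu).symm

theorem hasDerivAt_fluxOrderIso_symm {y : ℝ}
    (hy : (fluxOrderIso hγ hc₀).symm y ∈ Ioo 0 (cStar γ c₀)) :
    HasDerivAt (fluxOrderIso hγ hc₀).symm (fluxDeriv γ c₀ ((fluxOrderIso hγ hc₀).symm y))⁻¹ y := by
  set u := (fluxOrderIso hγ hc₀).symm y
  have hu2 : u ^ 2 < cStar γ c₀ ^ 2 := pow_lt_pow_left₀ hy.2 hy.1.le two_ne_zero
  have hext : fluxOrderIso hγ hc₀ =ᶠ[𝓝 u] flux γ c₀ :=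
    eventually_of_mem (isOpen_Ioo.mem_nhds hy) fun v hv =>
      fluxOrderIso_apply hγ hc₀ (Ioo_subset_Icc_self hv)
  exact HasDerivAt.of_local_left_inverse (fluxOrderIso hγ hc₀).symm.continuous.continuousAt
    ((hasDerivAt_flux hγ (sonic_radicand_pos hγ hc₀ hu2.le)).congr_of_eventuallyEq hext)
    (fluxDeriv_pos hγ hc₀ hu2).ne' (Eventually.of_forall (OrderIso.apply_symm_apply _))

noncomputable def subsonicSolution (θ₁ u₁ θ : ℝ) : ℝ :=
  (fluxOrderIso hγ hc₀).symm (sin θ₁ * flux γ c₀ u₁ / sin θ)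

theorem subsonicSolution_self {θ₁ u₁ : ℝ} (hsin₁ : sin θ₁ ≠ 0) (hu₁ : u₁ ∈ Icc 0 (cStar γ c₀)) :
    subsonicSolution hγ hc₀ θ₁ u₁ θ₁ = u₁ := by
  rw [subsonicSolution, mul_div_cancel_left₀ _ hsin₁, fluxOrderIso_symm_flux hγ hc₀ hu₁]

variable {θ₁ u₁ : ℝ} (hθ₁ : θ₁ < π) (hu₁ : u₁ ∈ Ioo 0 (cStar γ c₀))
include hθ₁ hu₁

theorem subsonicSolution_mem_Ioc {θ : ℝ} (hθ : θ ∈ Icc (π / 2) θ₁) :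
    subsonicSolution hγ hc₀ θ₁ u₁ θ ∈ Ioc 0 u₁ := by
  have hsin₁ := Real.sin_pos_of_mem_Icc hθ₁ (right_mem_Icc.2 (hθ.1.trans hθ.2))
  have hsin := Real.sin_le_sin_of_mem_Icc hθ₁.le hθ
  have hK : 0 < sin θ₁ * flux γ c₀ u₁ := mul_pos hsin₁ (flux_pos hγ hc₀ hu₁)
  have hE0 : (fluxOrderIso hγ hc₀).symm 0 = 0 := by
    simpa [flux] using fluxOrderIso_symm_flux hγ hc₀ (left_mem_Icc.2 (cStar_pos hγ hc₀).le)
  constructor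
  · rw [← hE0]
    exact (fluxOrderIso hγ hc₀).symm.strictMono (div_pos hK (hsin₁.trans_le hsin))
  · exact ((fluxOrderIso hγ hc₀).symm.monotone (div_le_div_of_nonneg_left hK.le hsin₁ hsin)).trans
      (subsonicSolution_self hγ hc₀ hsin₁.ne' (Ioo_subset_Icc_self hu₁)).le

theorem flux_subsonicSolution {θ : ℝ} (hθ : θ ∈ Icc (π / 2) θ₁) :
    flux γ c₀ (subsonicSolution hγ hc₀ θ₁ u₁ θ) = sin θ₁ * flux γ c₀ u₁ / sin θ := by
  have hmem := subsonicSolution_mem_Ioc hγ hc₀ hθ₁ hu₁ hθ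
  rw [← fluxOrderIso_apply hγ hc₀ ⟨hmem.1.le, hmem.2.trans hu₁.2.le⟩, subsonicSolution,
    OrderIso.apply_symm_apply]

theorem strictMonoOn_subsonicSolution :
    StrictMonoOn (subsonicSolution hγ hc₀ θ₁ u₁) (Icc (π / 2) θ₁) := by
  intro x hx y hy hxy
  have hsin_y := Real.sin_pos_of_mem_Icc hθ₁ hy
  have hsin₁ := Real.sin_pos_of_mem_Icc hθ₁ (right_mem_Icc.2 (hy.1.trans hy.2))
  have hsin : sin y < sin x :=
    Real.strictAntiOn_sin ⟨hx.1, hx.2.trans hθ₁.le⟩ ⟨hy.1, hy.2.trans hθ₁.le⟩ hxy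
  exact (fluxOrderIso hγ hc₀).symm.strictMono
    (div_lt_div_of_pos_left (mul_pos hsin₁ (flux_pos hγ hc₀ hu₁)) hsin_y hsin)

theorem hasDerivAt_subsonicSolution {θ : ℝ} (hθ : θ ∈ Icc (π / 2) θ₁) :
    HasDerivAt (subsonicSolution hγ hc₀ θ₁ u₁)
      (odeRhs γ c₀ θ (subsonicSolution hγ hc₀ θ₁ u₁ θ)) θ := by
  set u := subsonicSolution hγ hc₀ θ₁ u₁
  set K := sin θ₁ * flux γ c₀ u₁
  have hsin := (Real.sin_pos_of_mem_Icc hθ₁ hθ).ne'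
  have hmem := subsonicSolution_mem_Ioc hγ hc₀ hθ₁ hu₁ hθ
  have hu2 : u θ ^ 2 < cStar γ c₀ ^ 2 :=
    pow_lt_pow_left₀ (hmem.2.trans_lt hu₁.2) hmem.1.le two_ne_zero
  have hF' := (fluxDeriv_pos hγ hc₀ hu2).ne'
  have hrhs : odeRhs γ c₀ θ (u θ) = -(cot θ * flux γ c₀ (u θ)) / fluxDeriv γ c₀ (u θ) := by
    rw [eq_div_iff hF', mul_comm, fluxDeriv_mul_odeRhs hγ hu2]
  have hK : HasDerivAt (fun t => K / sin t) (-(K * cos θ) / sin θ ^ 2) θ :=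
    ((hasDerivAt_const θ K).div (hasDerivAt_sin θ) hsin).congr_deriv (by ring)
  have hinv := hasDerivAt_fluxOrderIso_symm hγ hc₀ ⟨hmem.1, hmem.2.trans_lt hu₁.2⟩
  refine (hinv.comp θ hK).congr_deriv ?_
  show (fluxDeriv γ c₀ (u θ))⁻¹ * (-(K * cos θ) / sin θ ^ 2) = _
  rw [hrhs, flux_subsonicSolution hγ hc₀ hθ₁ hu₁ hθ, cot_eq_cos_div_sin]
  field_simp
  ring

end Solution

/-- the subsonic Cauchy problem: for `θ₁ ∈ (π/2, π)` and `u₁ ∈ (0, c_*)`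
there is a unique C¹ solution on `[π/2, θ₁]` of `u′ = cot θ · c(u)²u/(u² − c(u)²)` with
`u(θ₁) = u₁`, staying subsonic, and it is strictly increasing. -/
theorem subsonic_cauchy_problem (γ c₀ θ₁ u₁ : ℝ) (hγ : 1 < γ) (hc₀ : 0 < c₀)
    (hθ₁ : θ₁ ∈ Set.Ioo (π / 2) π) (hu₁ : u₁ ∈ Set.Ioo 0 (cStar γ c₀)) :
    ∃ u : ℝ → ℝ,
      (ContDiffOn ℝ 1 u (Set.Icc (π / 2) θ₁) ∧
        u θ₁ = u₁ ∧
        (∀ θ ∈ Set.Icc (π / 2) θ₁, u θ ∈ Set.Ioo 0 (cStar γ c₀)) ∧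
        (∀ θ ∈ Set.Icc (π / 2) θ₁,
          HasDerivWithinAt u
            (Real.cot θ * sonic γ c₀ (u θ) ^ 2 * u θ / (u θ ^ 2 - sonic γ c₀ (u θ) ^ 2))
            (Set.Icc (π / 2) θ₁) θ)) ∧
      StrictMonoOn u (Set.Icc (π / 2) θ₁) ∧
      ∀ v : ℝ → ℝ,
        (ContDiffOn ℝ 1 v (Set.Icc (π / 2) θ₁) ∧
          v θ₁ = u₁ ∧
          (∀ θ ∈ Set.Icc (π / 2) θ₁, v θ ∈ Set.Ioo 0 (cStar γ c₀)) ∧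
          (∀ θ ∈ Set.Icc (π / 2) θ₁,
            HasDerivWithinAt v
              (Real.cot θ * sonic γ c₀ (v θ) ^ 2 * v θ / (v θ ^ 2 - sonic γ c₀ (v θ) ^ 2))
              (Set.Icc (π / 2) θ₁) θ)) →
        Set.EqOn u v (Set.Icc (π / 2) θ₁) := by
  obtain ⟨hπθ₁, hθ₁π⟩ := hθ₁
  have hsin : ∀ θ ∈ Icc (π / 2) θ₁, sin θ ≠ 0 := fun θ hθ =>
    (Real.sin_pos_of_mem_Icc hθ₁π hθ).ne'
  set u := subsonicSolution hγ hc₀ θ₁ u₁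
  have hu : ∀ θ ∈ Icc (π / 2) θ₁, u θ ∈ Ioo 0 (cStar γ c₀) := fun θ hθ =>
    have h := subsonicSolution_mem_Ioc hγ hc₀ hθ₁π hu₁ hθ
    ⟨h.1, h.2.trans_lt hu₁.2⟩
  have hu' : ∀ θ ∈ Icc (π / 2) θ₁,
      HasDerivWithinAt u (odeRhs γ c₀ θ (u θ)) (Icc (π / 2) θ₁) θ := fun θ hθ =>
    (hasDerivAt_subsonicSolution hγ hc₀ hθ₁π hu₁ hθ).hasDerivWithinAt
  have huθ₁ : u θ₁ = u₁ :=
    subsonicSolution_self hγ hc₀ (hsin θ₁ (right_mem_Icc.2 hπθ₁.le)) (Ioo_subset_Icc_self hu₁)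
  refine ⟨u, ⟨?_, huθ₁, hu, hu'⟩, strictMonoOn_subsonicSolution hγ hc₀ hθ₁π hu₁, ?_⟩
  · exact contDiffOn_one_of_hasDerivWithinAt (uniqueDiffOn_Icc hπθ₁) hu'
      (continuousOn_odeRhs_comp hγ hsin
        (fun θ hθ => pow_lt_pow_left₀ (hu θ hθ).2 (hu θ hθ).1.le two_ne_zero)
        fun θ hθ => (hu' θ hθ).continuousWithinAt)
  · rintro v ⟨-, hvθ₁, hv, hv'⟩
    exact eqOn_of_odeRhs hγ hc₀ hsin hu hv hu' hv' (huθ₁.trans hvθ₁.symm)
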